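/- If a nonempty graph G has a unique minimum Roman dominating function, then b_R(G) = 1, i.e., there exists a single edge whose removal increases the Roman domination number. -/
import Mathlib


open SimpleGraph Finset

/-- A Roman dominating function: `f : V → ℕ` taking values in `{0,1,2}` such that
every vertex with value `0` has a neighbor with value `2`. -/
def IsRDF {V : Type*} (G : SimpleGraph V) (f : V → ℕ) : Prop :=
  (∀ v, f v ≤ 2) ∧ ∀ v, f v = 0 → ∃ u, G.Adj v u ∧ f u = 2

/-- The Roman domination number: minimum weight of a Roman dominating function. -/
noncomputable def romanDomNum {V : Type*} (G : SimpleGraph V) [Fintype V] : ℕ :=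
  sInf {w | ∃ f : V → ℕ, IsRDF G f ∧ ∑ v, f v = w}

/-- The Roman bondage number: minimum number of edges whose removal increases
the Roman domination number (`⊤` if no such edge set exists). -/
noncomputable def romanBondage {V : Type*} (G : SimpleGraph V) [Fintype V] : ℕ∞ :=
  sInf {k | ∃ B : Finset (Sym2 V), ↑B ⊆ G.edgeSet ∧ (B.card : ℕ∞) = k ∧
    romanDomNum (G.deleteEdges ↑B) > romanDomNum G}

/-- A dominating set: every vertex is in `S` or adjacent to a member of `S`. -/
def IsDomSet {V : Type*} (G : SimpleGraph V) (S : Set V) : Prop :=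
  ∀ v, v ∈ S ∨ ∃ u ∈ S, G.Adj v u

/-- The domination number: minimum size of a dominating set. -/
noncomputable def domNum {V : Type*} (G : SimpleGraph V) [Fintype V] : ℕ :=
  sInf {k | ∃ S : Finset V, IsDomSet G ↑S ∧ S.card = k}

/-- The bondage number: minimum number of edges whose removal increases
the domination number (`⊤` if no such edge set exists). -/
noncomputable def bondage {V : Type*} (G : SimpleGraph V) [Fintype V] : ℕ∞ :=
  sInf {k | ∃ B : Finset (Sym2 V), ↑B ⊆ G.edgeSet ∧ (B.card : ℕ∞) = k ∧
    domNum (G.deleteEdges ↑B) > domNum G}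

lemma rdn_le {V : Type*} [Fintype V] (G : SimpleGraph V) (f : V → ℕ)
    (h : IsRDF G f) : romanDomNum G ≤ ∑ v, f v :=
  Nat.sInf_le ⟨f, h, rfl⟩

lemma one_isRDF {V : Type*} (G : SimpleGraph V) : IsRDF G (fun _ => 1) :=
  ⟨fun _ => one_le_two, fun _ h => absurd h one_ne_zero⟩

lemma rdn_exists {V : Type*} [Fintype V] (G : SimpleGraph V) :
    ∃ f : V → ℕ, IsRDF G f ∧ ∑ v, f v = romanDomNum G := by
  have h := Nat.sInf_mem (s := {w | ∃ f : V → ℕ, IsRDF G f ∧ ∑ v, f v = w})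
    ⟨_, fun _ => 1, one_isRDF G, rfl⟩
  exact h

theorem roman_bondage_of_unique_rdf {V : Type*} [Fintype V]
    (G : SimpleGraph V) (hne : G ≠ ⊥)
    (huniq : ∃! f : V → ℕ, IsRDF G f ∧ ∑ v, f v = romanDomNum G) :
    romanBondage G = 1 := by
  classical
  obtain ⟨f, ⟨hfR, hfw⟩, hfu⟩ := huniq
  -- an edge exists
  obtain ⟨a, b, hab⟩ : ∃ a b, G.Adj a b := by
    by_contra h
    push_neg at h
    exact hne (by ext x y; simp [h x y])
  -- Step 1: some vertex has value 0
  have hzero : ∃ v, f v = 0 := by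
    by_contra h
    push_neg at h
    have h1 : ∀ v, 1 ≤ f v := fun v => Nat.one_le_iff_ne_zero.2 (h v)
    have hcard : romanDomNum G ≤ Fintype.card V := by
      have := rdn_le G (fun _ => 1) (one_isRDF G)
      simpa using this
    have hsum1 : (∑ _v : V, (1 : ℕ)) = ∑ v, f v := by
      apply le_antisymm (Finset.sum_le_sum fun v _ => h1 v)
      calc ∑ v, f v = romanDomNum G := hfw
        _ ≤ Fintype.card V := hcard
        _ = ∑ v : V, 1 := by simp
    have hall1 : ∀ v, f v = 1 := by
      intro v
      have := (Finset.sum_eq_sum_iff_of_le (fun v _ => h1 v)).1 hsum1 v (Finset.mem_univ v)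
      omega
    -- build another min RDF
    set g := Function.update (Function.update f b 0) a 2 with hg
    have hne' : a ≠ b := hab.ne
    have hga : g a = 2 := by simp [hg]
    have hgb : g b = 0 := by simp [hg, Function.update_of_ne (Ne.symm hne')]
    have hgother : ∀ w, w ≠ a → w ≠ b → g w = f w := by
      intro w hwa hwb; simp [hg, Function.update_of_ne hwa, Function.update_of_ne hwb]
    have hgR : IsRDF G g := by
      constructor
      · intro v
        rcases eq_or_ne v a with rfl | hva
        · simp [hga]
        rcases eq_or_ne v b with rfl | hvb
        · simp [hgb]
        · rw [hgother v hva hvb]; exact hfR.1 v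
      · intro v hv
        rcases eq_or_ne v b with rfl | hvb
        · exact ⟨a, hab.symm, hga⟩
        rcases eq_or_ne v a with rfl | hva
        · rw [hga] at hv; omega
        · rw [hgother v hva hvb, hall1 v] at hv; omega
    have hsg : ∑ v, g v = ∑ v, f v := by
      have hsub : ({a, b} : Finset V) ⊆ Finset.univ := Finset.subset_univ _
      rw [← Finset.sum_sdiff hsub, ← Finset.sum_sdiff (f := f) hsub]
      congr 1
      · exact Finset.sum_congr rfl fun w hw => by
          simp only [Finset.mem_sdiff, Finset.mem_insert, Finset.mem_singleton] at hw
          exact hgother w (fun h => hw.2 (Or.inl h)) (fun h => hw.2 (Or.inr h))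
      · rw [Finset.sum_pair hne', Finset.sum_pair hne', hga, hgb, hall1 a, hall1 b]
    have := hfu g ⟨hgR, hsg.trans hfw⟩
    have : g b = f b := by rw [this]
    rw [hgb, hall1 b] at this
    omega
  -- Step 2: some 0-vertex has a unique 2-neighbor
  have hv0 : ∃ v u, f v = 0 ∧ G.Adj v u ∧ f u = 2 ∧
      ∀ x, G.Adj v x → f x = 2 → x = u := by
    by_contra hcon
    push_neg at hcon
    obtain ⟨v, hv⟩ := hzero
    obtain ⟨u, hadj, hu2⟩ := hfR.2 v hv
    set g := Function.update f u 1 with hg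
    have hgu : g u = 1 := by simp [hg]
    have hgother : ∀ w, w ≠ u → g w = f w := fun w hw => by
      simp [hg, Function.update_of_ne hw]
    have hgR : IsRDF G g := by
      constructor
      · intro w
        rcases eq_or_ne w u with rfl | hwu
        · omega
        · rw [hgother w hwu]; exact hfR.1 w
      · intro w hw
        have hwu : w ≠ u := fun h => by rw [h, hgu] at hw; omega
        rw [hgother w hwu] at hw
        obtain ⟨x, hx, hx2⟩ := hfR.2 w hw
        rcases eq_or_ne x u with rfl | hxu
        · obtain ⟨y, hy, hy2, hyu⟩ := hcon w x hw hx hx2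
          exact ⟨y, hy, by rw [hgother y hyu]; exact hy2⟩
        · exact ⟨x, hx, by rw [hgother x hxu]; exact hx2⟩
    have hsg : ∑ w, g w + 1 = ∑ w, f w := by
      rw [← Finset.add_sum_erase _ g (Finset.mem_univ u),
          ← Finset.add_sum_erase _ f (Finset.mem_univ u), hgu, hu2]
      have : ∑ w ∈ Finset.univ.erase u, g w = ∑ w ∈ Finset.univ.erase u, f w :=
        Finset.sum_congr rfl fun w hw => hgother w (Finset.ne_of_mem_erase hw)
      omega
    have := rdn_le G g hgR
    omega
  obtain ⟨v, u, hv0', hadj, hu2, huniq2⟩ := hv0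
  -- Step 3: deleting edge s(v,u) increases romanDomNum
  set e : Sym2 V := s(v, u) with he
  have hkey : romanDomNum (G.deleteEdges (↑({e} : Finset (Sym2 V)))) > romanDomNum G := by
    set G' := G.deleteEdges (↑({e} : Finset (Sym2 V))) with hG'
    obtain ⟨h, hhR, hhw⟩ := rdn_exists G'
    have hRG : IsRDF G h := by
      refine ⟨hhR.1, fun w hw => ?_⟩
      obtain ⟨x, hx, hx2⟩ := hhR.2 w hw
      exact ⟨x, (SimpleGraph.deleteEdges_adj.mp hx).1, hx2⟩
    have hle : romanDomNum G ≤ romanDomNum G' := hhw ▸ rdn_le G h hRG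
    refine lt_of_le_of_ne hle fun heq => ?_
    have hhf : h = f := hfu h ⟨hRG, hhw.trans heq.symm⟩
    rw [hhf] at hhR
    obtain ⟨x, hx, hx2⟩ := hhR.2 v hv0'
    have hxG := SimpleGraph.deleteEdges_adj.mp hx
    have : x = u := huniq2 x hxG.1 hx2
    apply hxG.2
    rw [this]
    simp [he]
  -- Conclude
  apply le_antisymm
  · apply sInf_le
    refine ⟨{e}, ?_, by simp, hkey⟩
    intro x hx
    simp only [Finset.coe_singleton, Set.mem_singleton_iff] at hx
    rw [hx, he, SimpleGraph.mem_edgeSet]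
    exact hadj
  · apply le_sInf
    rintro k ⟨B, hB, hcard, hgt⟩
    by_contra hlt
    push_neg at hlt
    have hB0 : B.card = 0 := by
      rw [← hcard] at hlt
      exact_mod_cast Nat.lt_one_iff.mp (by exact_mod_cast hlt)
    rw [Finset.card_eq_zero.mp hB0] at hgt
    simp only [Finset.coe_empty, SimpleGraph.deleteEdges_empty] at hgt
    exact lt_irrefl _ hgt
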